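/- arXiv:1801.09608 — 5 statements merged into one kernel-verified Lean document; each statement's English description precedes it below -/
import Mathlib

section
/- Define the $N\times N$ matrix $F(\boldsymbol\sigma', a, \boldsymbol\sigma)$ with entries $F_{lj} = \prod_{k\ne l} \frac{\sin\pi((a+1)/N + \sigma'^{(j)} - \sigma^{(k)})}{\sin\pi(\sigma^{(k)} - \sigma^{(l)})}$, assuming the denominators are nonzero. Then $F(\boldsymbol\sigma', a, \boldsymbol\sigma)\, F(-\boldsymbol\sigma, a, -\boldsymbol\sigma') = I$, i.e. $F^{-1}(\boldsymbol\sigma',a,\boldsymbol\sigma) = F(-\boldsymbol\sigma, a, -\boldsymbol\sigma')$. -/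
/-! With `z j = exp (2πi ((a + 1) / N + σ' j))` and `w k = exp (2πi σ k)`, every ratio of
sines in `F` is a ratio of differences of these exponentials times a phase, and the phases make
`F(σ', a, σ)` and `F(-σ, a, -σ')` diagonal conjugates `D A E` and `E⁻¹ B D⁻¹` of rational
matrices `A`, `B` in `z` and `w`. The identity `A B = 1` is Lagrange interpolation:
`Q_l = ∏_{k ≠ l} (X - w k)` has degree `N - 1`, so interpolating it at the nodes `z` and
evaluating at `w m` gives `(A B)_{lm} = ± Q_l (w m) / ∏_{k ≠ l} (w k - w l)`, which is `0` for
`m ≠ l` and `1` for `m = l`. -/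

/-- The fusion matrix `F(σ', a, σ)` with entries
`F_{lj} = ∏_{k ≠ l} sin π((a+1)/N + σ'_j - σ_k) / sin π(σ_k - σ_l)`. -/
noncomputable def Fmat {N : ℕ} (σ' : Fin N → ℂ) (a : ℂ) (σ : Fin N → ℂ) :
    Matrix (Fin N) (Fin N) ℂ :=
  Matrix.of fun l j =>
    ∏ k ∈ Finset.univ.erase l,
      Complex.sin ((Real.pi : ℂ) * ((a + 1) / N + σ' j - σ k)) /
        Complex.sin ((Real.pi : ℂ) * (σ k - σ l))

open Complex Finset Polynomial Matrix
open scoped Real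

section Lagrange

variable {F ι : Type*} [Field F] [Fintype ι] [DecidableEq ι]

theorem sum_eval_mul_prod_erase_div_eq_eval {z : ι → F} (hz : Function.Injective z) {Q : F[X]}
    (hQ : Q.degree < Fintype.card ι) (u : F) :
    ∑ j, Q.eval (z j) * ∏ k ∈ univ.erase j, (u - z k) / (z j - z k) = Q.eval u := by
  conv_rhs => rw [Lagrange.eq_interpolate (f := Q) hz.injOn (by rwa [card_univ])]
  simp only [Lagrange.interpolate_apply, eval_finsetSum, eval_mul, eval_C, Lagrange.basis,
    eval_prod, Lagrange.basisDivisor, eval_sub, eval_X, div_eq_inv_mul]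

theorem of_prod_erase_div_mul_of_prod_erase_div_eq_one {z w : ι → F}
    (hz : Function.Injective z) (hw : Function.Injective w) :
    (of fun l j => ∏ k ∈ univ.erase l, (z j - w k) / (w k - w l)) *
      (of fun j m => ∏ k ∈ univ.erase j, (z k - w m) / (z j - z k)) = 1 := by
  ext l m
  have hcard (i : ι) : #(univ.erase i) = Fintype.card ι - 1 := by
    rw [card_erase_of_mem (mem_univ i), card_univ]
  set n := Fintype.card ι - 1
  set Q := Lagrange.nodal (univ.erase l) w
  have hQ : Q.degree < Fintype.card ι := by
    rw [Lagrange.degree_nodal, hcard]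
    exact_mod_cast Nat.sub_lt (Fintype.card_pos_iff.mpr ⟨l⟩) one_pos
  have hP : ∏ k ∈ univ.erase l, (w k - w l) ≠ 0 :=
    prod_ne_zero_iff.mpr fun k hk => sub_ne_zero.mpr (hw.ne (ne_of_mem_erase hk))
  have hA (j : ι) : ∏ k ∈ univ.erase l, (z j - w k) / (w k - w l) =
      Q.eval (z j) / ∏ k ∈ univ.erase l, (w k - w l) := by
    rw [prod_div_distrib, Lagrange.eval_nodal]
  have hB (j : ι) : ∏ k ∈ univ.erase j, (z k - w m) / (z j - z k) =
      (-1) ^ n * ∏ k ∈ univ.erase j, (w m - z k) / (z j - z k) := by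
    rw [← hcard j, ← prod_neg]
    simp only [← neg_div, neg_sub]
  calc _ = (-1) ^ n / (∏ k ∈ univ.erase l, (w k - w l)) *
          ∑ j, Q.eval (z j) * ∏ k ∈ univ.erase j, (w m - z k) / (z j - z k) := by
        simp only [mul_apply, of_apply, hA, hB, mul_sum]
        refine sum_congr rfl fun j _ => ?_
        ring
    _ = (-1) ^ n / (∏ k ∈ univ.erase l, (w k - w l)) * ∏ k ∈ univ.erase l, (w m - w k) := by
        rw [sum_eval_mul_prod_erase_div_eq_eval hz hQ, Lagrange.eval_nodal]
    _ = (1 : Matrix ι ι F) l m := by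
        rcases eq_or_ne l m with rfl | hlm
        · have hsign : ∏ k ∈ univ.erase l, (w l - w k) =
              (-1) ^ n * ∏ k ∈ univ.erase l, (w k - w l) := by
            rw [← hcard l, ← prod_neg]
            simp only [neg_sub]
          rw [one_apply_eq, hsign, div_mul_comm, mul_div_cancel_right₀ _ hP, ← pow_add,
            Even.neg_one_pow ⟨n, rfl⟩]
        · have hm : m ∈ univ.erase l := mem_erase.mpr ⟨hlm.symm, mem_univ m⟩
          rw [one_apply_ne hlm, prod_eq_zero (f := fun k => w m - w k) hm (sub_self _), mul_zero]

end Lagrange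

namespace Complex

theorem sin_pi_mul_sub (x y : ℂ) :
    sin (π * (x - y)) =
      (cexp (2 * π * I * x) - cexp (2 * π * I * y)) * cexp (-(π * I * (x + y))) / (2 * I) := by
  have h1 : 2 * π * I * x + -(π * I * (x + y)) = π * (x - y) * I := by ring
  have h2 : 2 * π * I * y + -(π * I * (x + y)) = -(π * (x - y)) * I := by ring
  rw [sub_mul, ← exp_add, ← exp_add, h1, h2, sin]
  field_simp
  ring_nf
  rw [I_sq]
  ring

theorem exp_two_pi_I_mul_ne_of_sin_pi_mul_sub_ne_zero {x y : ℂ} (h : sin (π * (x - y)) ≠ 0) :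
    cexp (2 * π * I * x) ≠ cexp (2 * π * I * y) := by
  intro hxy
  rw [sin_pi_mul_sub, hxy, sub_self, zero_mul, zero_div] at h
  exact h rfl

theorem sin_pi_mul_sub_div_sin_pi_mul_sub (x y : ℂ) {p q : ℂ} (h : sin (π * (p - q)) ≠ 0) :
    sin (π * (x - y)) / sin (π * (p - q)) =
      (cexp (2 * π * I * x) - cexp (2 * π * I * y)) /
        (cexp (2 * π * I * p) - cexp (2 * π * I * q)) * cexp (π * I * (p + q - x - y)) := by
  have hpq := sub_ne_zero.mpr (exp_two_pi_I_mul_ne_of_sin_pi_mul_sub_ne_zero h)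
  have hphase : cexp (-(π * I * (x + y))) =
      cexp (π * I * (p + q - x - y)) * cexp (-(π * I * (p + q))) := by
    rw [← exp_add]
    ring_nf
  rw [sin_pi_mul_sub, sin_pi_mul_sub, hphase]
  field_simp

end Complex

theorem Matrix.diagonal_exp_pow_mul_diagonal_exp_pow {ι : Type*} [Fintype ι] [DecidableEq ι]
    {s t : ι → ℂ} (hst : ∀ i, s i + t i = 0) (n : ℕ) :
    diagonal (fun i => cexp (s i) ^ n) * diagonal (fun i => cexp (t i) ^ n) = 1 := by
  simp only [diagonal_mul_diagonal, ← mul_pow, ← exp_add, hst, exp_zero, one_pow]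
  exact diagonal_one

section Fmat

variable {N : ℕ} {σ' σ : Fin N → ℂ} (a : ℂ)

theorem prod_univ_erase_mul_mul {M : Type*} [CommMonoid M] (l : Fin N) (f : Fin N → M)
    (b c : M) :
    ∏ k ∈ univ.erase l, f k * (b * c) =
      b ^ (N - 1) * (∏ k ∈ univ.erase l, f k) * c ^ (N - 1) := by
  rw [prod_mul_distrib, prod_const, card_erase_of_mem (mem_univ l), card_univ, Fintype.card_fin,
    mul_pow]
  ac_rfl

theorem Fmat_eq_diagonal_mul_mul_diagonal
    (hσ : ∀ k l : Fin N, k ≠ l → sin (π * (σ k - σ l)) ≠ 0) :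
    Fmat σ' a σ =
      diagonal (fun l => cexp (π * I * σ l) ^ (N - 1)) *
        (of fun l j => ∏ k ∈ univ.erase l, (cexp (2 * π * I * ((a + 1) / N + σ' j)) -
          cexp (2 * π * I * σ k)) / (cexp (2 * π * I * σ k) - cexp (2 * π * I * σ l))) *
        diagonal (fun j => cexp (-(π * I * ((a + 1) / N + σ' j))) ^ (N - 1)) := by
  ext l j
  rw [mul_diagonal, diagonal_mul, of_apply, ← prod_univ_erase_mul_mul]
  simp only [Fmat, of_apply]
  refine prod_congr rfl fun k hk => ?_
  rw [sin_pi_mul_sub_div_sin_pi_mul_sub _ _ (hσ k l (ne_of_mem_erase hk)), ← exp_add]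
  ring_nf

theorem Fmat_neg_eq_diagonal_mul_mul_diagonal
    (hσ' : ∀ k l : Fin N, k ≠ l → sin (π * (σ' k - σ' l)) ≠ 0) :
    Fmat (-σ) a (-σ') =
      diagonal (fun j => cexp (π * I * ((a + 1) / N + σ' j)) ^ (N - 1)) *
        (of fun j m => ∏ k ∈ univ.erase j, (cexp (2 * π * I * ((a + 1) / N + σ' k)) -
          cexp (2 * π * I * σ m)) / (cexp (2 * π * I * ((a + 1) / N + σ' j)) -
            cexp (2 * π * I * ((a + 1) / N + σ' k)))) *
        diagonal (fun m => cexp (-(π * I * σ m)) ^ (N - 1)) := by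
  ext j m
  rw [mul_diagonal, diagonal_mul, of_apply, ← prod_univ_erase_mul_mul]
  simp only [Fmat, of_apply]
  refine prod_congr rfl fun k hk => ?_
  have hjk : sin (π * ((a + 1) / N + σ' j - ((a + 1) / N + σ' k))) ≠ 0 := by
    rw [add_sub_add_left_eq_sub]
    exact hσ' j k (ne_of_mem_erase hk).symm
  rw [Pi.neg_apply, Pi.neg_apply, Pi.neg_apply,
    show (a + 1) / N + -σ m - -σ' k = (a + 1) / N + σ' k - σ m by ring,
    show -σ' k - -σ' j = (a + 1) / N + σ' j - ((a + 1) / N + σ' k) by ring,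
    sin_pi_mul_sub_div_sin_pi_mul_sub _ _ hjk, ← exp_add]
  ring_nf

end Fmat

/-- `F(σ', a, σ) F(-σ, a, -σ') = I`, i.e. `F⁻¹(σ',a,σ) = F(-σ,a,-σ')`. -/
theorem stmt6 {N : ℕ} (σ' σ : Fin N → ℂ) (a : ℂ)
    (hσ : ∀ k l : Fin N, k ≠ l → Complex.sin ((Real.pi : ℂ) * (σ k - σ l)) ≠ 0)
    (hσ' : ∀ k l : Fin N, k ≠ l → Complex.sin ((Real.pi : ℂ) * (σ' k - σ' l)) ≠ 0) :
    Fmat σ' a σ * Fmat (-σ) a (-σ') = 1 := by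
  have hz : Function.Injective fun j => cexp (2 * π * I * ((a + 1) / N + σ' j)) :=
    fun j k hjk => by_contra fun hne => exp_two_pi_I_mul_ne_of_sin_pi_mul_sub_ne_zero
      (by rw [add_sub_add_left_eq_sub]; exact hσ' j k hne) hjk
  have hw : Function.Injective fun k => cexp (2 * π * I * σ k) :=
    fun k l hkl => by_contra fun hne =>
      exp_two_pi_I_mul_ne_of_sin_pi_mul_sub_ne_zero (hσ k l hne) hkl
  rw [Fmat_eq_diagonal_mul_mul_diagonal a hσ, Fmat_neg_eq_diagonal_mul_mul_diagonal a hσ']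
  simp only [Matrix.mul_assoc]
  rw [← Matrix.mul_assoc (diagonal _) (diagonal _),
    diagonal_exp_pow_mul_diagonal_exp_pow (fun j => neg_add_cancel _), Matrix.one_mul,
    ← Matrix.mul_assoc (of _) (of _), of_prod_erase_div_mul_of_prod_erase_div_eq_one hz hw,
    Matrix.one_mul, diagonal_exp_pow_mul_diagonal_exp_pow (fun l => add_neg_cancel _)]
end

section
/- With $F(\boldsymbol\sigma',a,\boldsymbol\sigma)$ as above and $\boldsymbol h_m\in\mathbb{C}^N$ the vector with components $h_m^{(k)}=\delta_{mk}-1/N$, and $D_m$ the diagonal matrix with $(D_m)_{kk}=(-1)^{\delta_{km}}$, one has $F(\boldsymbol\sigma', a, \boldsymbol\sigma + \boldsymbol h_m) = D_m^{N-1} F(\boldsymbol\sigma', a+1, \boldsymbol\sigma)$ and $F(\boldsymbol\sigma', a, \boldsymbol\sigma - \boldsymbol h_m) = D_m^{N-1} F(\boldsymbol\sigma', a-1, \boldsymbol\sigma)$. -/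
/-- Weight vector `h_m` of the first fundamental representation of `sl_N`. -/
noncomputable def hvec (N : ℕ) (m : Fin N) : Fin N → ℂ :=
  fun k => (if k = m then 1 else 0) - 1 / N

noncomputable def Dmat {N : ℕ} (m : Fin N) : Matrix (Fin N) (Fin N) ℂ :=
  Matrix.diagonal fun k => if k = m then -1 else 1

open Complex Real

theorem Complex.sin_add_int_mul_pi (x : ℂ) (n : ℤ) :
    sin (x + n * (π : ℂ)) = (-1) ^ n.natAbs * sin x := by
  rw [sin_antiperiodic.add_int_mul_eq, Int.coe_negOnePow]

theorem Complex.sin_sub_int_mul_pi (x : ℂ) (n : ℤ) :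
    sin (x - n * (π : ℂ)) = (-1) ^ n.natAbs * sin x := by
  rw [sin_antiperiodic.sub_int_mul_eq, Int.coe_negOnePow]

theorem Dmat_pow {N : ℕ} (m : Fin N) (p : ℕ) :
    Dmat m ^ p = Matrix.diagonal fun k => if k = m then (-1) ^ p else 1 := by
  rw [Dmat, Matrix.diagonal_pow]
  congr 1
  funext k
  split_ifs <;> simp [*]

theorem hvec_smul_apply (N : ℕ) (m k : Fin N) (c : ℂ) :
    (c • hvec N m) k = (if k = m then c else 0) - c / N := by
  simp only [hvec, Pi.smul_apply, smul_eq_mul]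
  split_ifs <;> ring

theorem sin_div_sin_add_int_smul_hvec {N : ℕ} (σ : Fin N → ℂ) (m : Fin N) (n : ℤ) (x : ℂ)
    {k l : Fin N} (hkl : k ≠ l) :
    sin ((π : ℂ) * (x - (σ + (n : ℂ) • hvec N m) k)) /
        sin ((π : ℂ) * ((σ + (n : ℂ) • hvec N m) k - (σ + (n : ℂ) • hvec N m) l)) =
      (if l = m then (-1) ^ n.natAbs else 1) *
        (sin ((π : ℂ) * (x + n / N - σ k)) / sin ((π : ℂ) * (σ k - σ l))) := by
  have hsign : ((-1 : ℂ) ^ n.natAbs)⁻¹ = (-1) ^ n.natAbs := by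
    rw [← inv_pow, inv_neg_one]
  simp only [Pi.add_apply, hvec_smul_apply]
  by_cases hkm : k = m <;> by_cases hlm : l = m
  · exact absurd (hkm.trans hlm.symm) hkl
  · subst hkm
    simp only [hlm, if_true, if_false, one_mul]
    have e1 : (π : ℂ) * (x - (σ k + (n - n / N))) = π * (x + n / N - σ k) - n * π := by ring
    have e2 : (π : ℂ) * (σ k + (n - n / N) - (σ l + (0 - n / N))) =
        π * (σ k - σ l) + n * π := by ring
    rw [e1, e2, Complex.sin_sub_int_mul_pi, Complex.sin_add_int_mul_pi,
      mul_div_mul_left _ _ (pow_ne_zero _ (by norm_num))]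
  · subst hlm
    simp only [hkm, if_true, if_false]
    have e1 : (π : ℂ) * (x - (σ k + (0 - n / N))) = π * (x + n / N - σ k) := by ring
    have e2 : (π : ℂ) * (σ k + (0 - n / N) - (σ l + (n - n / N))) =
        π * (σ k - σ l) - n * π := by ring
    rw [e1, e2, Complex.sin_sub_int_mul_pi, div_mul_eq_div_div_swap,
      div_eq_mul_inv _ ((-1) ^ _), hsign, mul_comm]
  · simp only [hkm, hlm, if_false, one_mul]
    congr 2 <;> ring

theorem Fmat_add_int_smul_hvec {N : ℕ} (σ' σ : Fin N → ℂ) (a : ℂ) (m : Fin N) (n : ℤ) :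
    Fmat σ' a (σ + (n : ℂ) • hvec N m) =
      Dmat m ^ (n.natAbs * (N - 1)) * Fmat σ' (a + n) σ := by
  ext l j
  have hx : (a + n + 1) / N + σ' j = (a + 1) / N + σ' j + n / N := by ring
  rw [Dmat_pow, Matrix.diagonal_mul]
  simp only [Fmat, Matrix.of_apply, hx]
  rw [Finset.prod_congr rfl fun k hk =>
      sin_div_sin_add_int_smul_hvec σ m n _ (Finset.ne_of_mem_erase hk),
    Finset.prod_mul_distrib, Finset.prod_const, Finset.card_erase_of_mem (Finset.mem_univ l),
    Finset.card_univ, Fintype.card_fin, pow_mul]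
  split_ifs <;> simp

theorem stmt7_general {N : ℕ} (σ' σ : Fin N → ℂ) (a : ℂ) (m : Fin N) :
    Fmat σ' a (σ + hvec N m) = Dmat m ^ (N - 1) * Fmat σ' (a + 1) σ ∧
      Fmat σ' a (σ - hvec N m) = Dmat m ^ (N - 1) * Fmat σ' (a - 1) σ := by
  constructor
  · simpa using Fmat_add_int_smul_hvec σ' σ a m 1
  · simpa [← sub_eq_add_neg] using Fmat_add_int_smul_hvec σ' σ a m (-1)

/-- shift identities in the third argument:
`F(σ', a, σ ± h_m) = D_m^{N-1} F(σ', a ± 1, σ)`. -/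
theorem stmt7 {N : ℕ} (σ' σ : Fin N → ℂ) (a : ℂ) (m : Fin N)
    (hσ : ∀ k l : Fin N, k ≠ l → Complex.sin ((Real.pi : ℂ) * (σ k - σ l)) ≠ 0)
    (hσp : ∀ k l : Fin N, k ≠ l →
      Complex.sin ((Real.pi : ℂ) * ((σ + hvec N m) k - (σ + hvec N m) l)) ≠ 0)
    (hσm : ∀ k l : Fin N, k ≠ l →
      Complex.sin ((Real.pi : ℂ) * ((σ - hvec N m) k - (σ - hvec N m) l)) ≠ 0) :
    Fmat σ' a (σ + hvec N m) = Dmat m ^ (N - 1) * Fmat σ' (a + 1) σ ∧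
      Fmat σ' a (σ - hvec N m) = Dmat m ^ (N - 1) * Fmat σ' (a - 1) σ :=
  stmt7_general σ' σ a m
end

section
/- With $F$, $\boldsymbol h_m$, $D_m$ as above, one has $F(\boldsymbol\sigma' + \boldsymbol h_m, a, \boldsymbol\sigma) = F(\boldsymbol\sigma', a-1, \boldsymbol\sigma) D_m^{N-1}$ and $F(\boldsymbol\sigma' - \boldsymbol h_m, a, \boldsymbol\sigma) = F(\boldsymbol\sigma', a+1, \boldsymbol\sigma) D_m^{N-1}$. -/
/-! `F(σ', a, σ)` depends on `σ'` and `a` only through the column parameters `(a + 1)/N + σ'_j`,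
and shifting such a parameter by an integer `n` multiplies each of the `N - 1` sine factors of
that column by `(-1)^n`, by antiperiodicity of `sin`. The shift `σ' ↦ σ' + h_m` together with
`a ↦ a - 1` changes the column parameters by `δ_{jm}`, which gives the first identity. The second
follows from the first applied at `σ' - h_m`, since `D_m² = 1`. -/

open Matrix

variable {N : ℕ}

theorem Fmat_eq_mul_diagonal_of_shift {σ' τ σ : Fin N → ℂ} {a b : ℂ} (n : Fin N → ℕ)
    (h : ∀ j, (a + 1) / N + σ' j = (b + 1) / N + τ j + n j) :
    Fmat σ' a σ = Fmat τ b σ * (diagonal fun j => (-1 : ℂ) ^ n j) ^ (N - 1) := by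
  ext l j
  have hsin : ∀ k, Complex.sin (Real.pi * ((a + 1) / N + σ' j - σ k))
      = (-1) ^ n j * Complex.sin (Real.pi * ((b + 1) / N + τ j - σ k)) := fun k => by
    rw [← Complex.sin_antiperiodic.add_nat_mul_eq, h]
    ring_nf
  simp only [Fmat, diagonal_pow, mul_diagonal, of_apply, Pi.pow_apply, hsin, mul_div_assoc,
    Finset.prod_mul_distrib, Finset.prod_const, Finset.card_erase_of_mem (Finset.mem_univ l),
    Finset.card_univ, Fintype.card_fin]
  ring

theorem Dmat_eq_diagonal_neg_one_pow (m : Fin N) :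
    Dmat m = diagonal fun j => (-1 : ℂ) ^ (if j = m then 1 else 0) := by
  unfold Dmat
  congr 1
  ext j
  split_ifs <;> simp

theorem Dmat_pow_mul_self (m : Fin N) (k : ℕ) : Dmat m ^ k * Dmat m ^ k = 1 := by
  have hD : Dmat m * Dmat m = 1 := by
    rw [Dmat, diagonal_mul_diagonal, ← diagonal_one]
    congr 1
    ext j
    split_ifs <;> simp
  rw [← (Commute.refl (Dmat m)).mul_pow, hD, one_pow]

theorem Fmat_add_hvec (σ' σ : Fin N → ℂ) (a : ℂ) (m : Fin N) :
    Fmat (σ' + hvec N m) a σ = Fmat σ' (a - 1) σ * Dmat m ^ (N - 1) := by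
  rw [Dmat_eq_diagonal_neg_one_pow]
  refine Fmat_eq_mul_diagonal_of_shift _ fun j => ?_
  simp only [Pi.add_apply, hvec]
  split_ifs <;> push_cast <;> ring

theorem Fmat_sub_hvec (σ' σ : Fin N → ℂ) (a : ℂ) (m : Fin N) :
    Fmat (σ' - hvec N m) a σ = Fmat σ' (a + 1) σ * Dmat m ^ (N - 1) := by
  have h := Fmat_add_hvec (σ' - hvec N m) σ (a + 1) m
  rw [sub_add_cancel, add_sub_cancel_right] at h
  rw [h, Matrix.mul_assoc, Dmat_pow_mul_self, Matrix.mul_one]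

theorem stmt8_general {N : ℕ} (σ' σ : Fin N → ℂ) (a : ℂ) (m : Fin N) :
    Fmat (σ' + hvec N m) a σ = Fmat σ' (a - 1) σ * Dmat m ^ (N - 1) ∧
      Fmat (σ' - hvec N m) a σ = Fmat σ' (a + 1) σ * Dmat m ^ (N - 1) :=
  ⟨Fmat_add_hvec σ' σ a m, Fmat_sub_hvec σ' σ a m⟩

/-- shift identities in the first argument:
`F(σ' ± h_m, a, σ) = F(σ', a ∓ 1, σ) D_m^{N-1}`. -/
theorem stmt8 {N : ℕ} (σ' σ : Fin N → ℂ) (a : ℂ) (m : Fin N)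
    (hσ : ∀ k l : Fin N, k ≠ l → Complex.sin ((Real.pi : ℂ) * (σ k - σ l)) ≠ 0) :
    Fmat (σ' + hvec N m) a σ = Fmat σ' (a - 1) σ * Dmat m ^ (N - 1) ∧
      Fmat (σ' - hvec N m) a σ = Fmat σ' (a + 1) σ * Dmat m ^ (N - 1) :=
  stmt8_general σ' σ a m
end

section
/- Let $\boldsymbol\theta_0, \boldsymbol\theta_\infty \in \mathbb{C}^N$ satisfy, for every integer $k\ge 1$, $\sum_{\alpha=1}^N [\theta_\infty^{(\alpha)}]_k - k\,[\tfrac{\boldsymbol\theta_\infty^2 - \boldsymbol\theta_0^2 - 1}{2}]_{k-1} - \sum_{\alpha=1}^N [\theta_0^{(\alpha)}]_k = 0$, where $\boldsymbol\theta^2 = \sum_\alpha (\theta^{(\alpha)})^2$. Then there exist indices $\alpha', \alpha''$ with $\theta_\infty^{(\alpha'')} = \theta_0^{(\alpha')} + 1$ and the multisets $\{\theta_\infty^{(\alpha)} : \alpha \ne \alpha''\}$ and $\{\theta_0^{(\alpha)} : \alpha \ne \alpha'\}$ coincide. -/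
/-!
With `x₀ = ½(θ∞² - θ₀² - 1)`, the forward difference `[x₀ + 1]ₖ - [x₀]ₖ = k [x₀]ₖ₋₁` turns the
hypothesis into the equality of all falling-factorial power sums of the multisets
`X = {x₀} ∪ {θ∞⁽ᵅ⁾}` and `Y = {x₀ + 1} ∪ {θ₀⁽ᵅ⁾}`. Falling factorials span all polynomials, so
`∑_{x ∈ X} p x = ∑_{y ∈ Y} p y` for every polynomial `p`; taking `p` vanishing on `X ∪ Y` except
at one point shows `X = Y` in characteristic zero. Since `x₀ ≠ x₀ + 1`, the element `x₀ + 1` of `X`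
is some `θ∞⁽ᵅ''⁾`, the element `x₀` of `Y` is some `θ₀⁽ᵅ'⁾`, and removing them leaves equal
multisets.
-/

noncomputable def fall (x : ℂ) (k : ℕ) : ℂ := ∏ i ∈ Finset.range k, (x - i)

open Polynomial

theorem Polynomial.span_range_descPochhammer (R : Type*) [Ring R] [Nontrivial R]
    [NoZeroDivisors R] :
    Submodule.span R (Set.range (descPochhammer R)) = ⊤ :=
  Sequence.span
    ⟨descPochhammer R, fun i => by
      rw [degree_eq_natDegree (monic_descPochhammer R i).ne_zero, descPochhammer_natDegree]⟩
    fun i => by simp [(monic_descPochhammer R i).leadingCoeff]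

theorem Polynomial.descPochhammer_succ_eval_add_one_sub {R : Type*} [CommRing R] (n : ℕ) (x : R) :
    (descPochhammer R (n + 1)).eval (x + 1) - (descPochhammer R (n + 1)).eval x =
      (n + 1) * (descPochhammer R n).eval x := by
  rw [descPochhammer_succ_eval n x, descPochhammer_succ_left, eval_mul, eval_X, eval_comp,
    eval_sub, eval_X, eval_one, add_sub_cancel_right]
  ring

namespace Multiset

variable {R : Type*} [CommRing R] [IsDomain R] {s t : Multiset R}

theorem sum_map_eval_eq_of_sum_map_descPochhammer_eval_eq
    (h : ∀ k, (s.map (descPochhammer R k).eval).sum = (t.map (descPochhammer R k).eval).sum)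
    (p : R[X]) : (s.map p.eval).sum = (t.map p.eval).sum := by
  have hp : p ∈ Submodule.span R (Set.range (descPochhammer R)) :=
    span_range_descPochhammer R ▸ Submodule.mem_top
  induction hp using Submodule.span_induction with
  | mem _ hq => obtain ⟨k, rfl⟩ := hq; exact h k
  | zero => simp
  | add p q _ _ hp hq => simp [sum_map_add, hp, hq]
  | smul c p _ hp => simp [sum_map_mul_left, hp]

theorem eq_of_sum_map_eval_eq [CharZero R]
    (h : ∀ p : R[X], (s.map p.eval).sum = (t.map p.eval).sum) : s = t := by
  classical
  ext a
  set p : R[X] := ∏ b ∈ (s + t).toFinset.erase a, (X - C b)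
  have hvanish : ∀ x ∈ s + t, x ≠ a → p.eval x = 0 := fun x hx hxa => by
    simp only [p, eval_prod, eval_sub, eval_X, eval_C]
    exact Finset.prod_eq_zero (Finset.mem_erase.2 ⟨hxa, mem_toFinset.2 hx⟩) (sub_self x)
  have hpa : p.eval a ≠ 0 := by
    simp only [p, eval_prod, eval_sub, eval_X, eval_C]
    exact Finset.prod_ne_zero_iff.2 fun b hb => sub_ne_zero.2 (Finset.ne_of_mem_erase hb).symm
  have hsum := h p
  rw [sum_map_eq_nsmul_single a fun x hxa hx => hvanish x (mem_add.2 (Or.inl hx)) hxa,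
    sum_map_eq_nsmul_single a fun x hxa hx => hvanish x (mem_add.2 (Or.inr hx)) hxa,
    nsmul_eq_mul, nsmul_eq_mul] at hsum
  exact_mod_cast mul_right_cancel₀ hpa hsum

theorem eq_of_sum_map_descPochhammer_eval_eq [CharZero R]
    (h : ∀ k, (s.map (descPochhammer R k).eval).sum = (t.map (descPochhammer R k).eval).sum) :
    s = t :=
  eq_of_sum_map_eval_eq (sum_map_eval_eq_of_sum_map_descPochhammer_eval_eq h)

end Multiset

theorem Finset.exists_map_erase_val_eq_of_map_val_eq_cons {ι α : Type*} [DecidableEq ι]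
    {s : Finset ι} {f : ι → α} {b : α} {u : Multiset α} (h : s.val.map f = b ::ₘ u) :
    ∃ i ∈ s, f i = b ∧ (s.erase i).val.map f = u := by
  obtain ⟨i, hi, rfl⟩ := Multiset.mem_map.1 (h ▸ Multiset.mem_cons_self b u)
  refine ⟨i, hi, rfl, (Multiset.cons_inj_right (f i)).1 ?_⟩
  rw [← h, ← Multiset.map_cons, Finset.erase_val, Multiset.cons_erase hi]

theorem fall_eq_descPochhammer_eval (x : ℂ) (k : ℕ) : fall x k = (descPochhammer ℂ k).eval x :=
  (descPochhammer_eval_eq_prod_range k x).symm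

/-- the fusion-rule constraint. If for all `k ≥ 1`
`∑_α [θ∞_α]_k - k [½(θ∞² - θ0² - 1)]_{k-1} - ∑_α [θ0_α]_k = 0`, then there are indices
`α''`, `α'` with `θ∞_{α''} = θ0_{α'} + 1` and the remaining multisets of components coincide. -/
theorem stmt13 {N : ℕ} (θ0 θinf : Fin N → ℂ)
    (h : ∀ k : ℕ, 1 ≤ k →
      ∑ α, fall (θinf α) k -
          (k : ℂ) * fall ((∑ α, (θinf α) ^ 2 - ∑ α, (θ0 α) ^ 2 - 1) / 2) (k - 1) -
        ∑ α, fall (θ0 α) k = 0) :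
    ∃ α'' α' : Fin N, θinf α'' = θ0 α' + 1 ∧
      Multiset.map θinf (Finset.univ.erase α'').val =
        Multiset.map θ0 (Finset.univ.erase α').val := by
  set x0 := (∑ α, θinf α ^ 2 - ∑ α, θ0 α ^ 2 - 1) / 2
  have hsums : ∀ k, ((x0 ::ₘ Finset.univ.val.map θinf).map (descPochhammer ℂ k).eval).sum =
      (((x0 + 1) ::ₘ Finset.univ.val.map θ0).map (descPochhammer ℂ k).eval).sum := by
    rintro (_ | m)
    · simp only [descPochhammer_zero, eval_one, Multiset.map_const', Multiset.card_cons,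
        Multiset.card_map]
    · have hm := h (m + 1) m.succ_pos
      simp only [fall_eq_descPochhammer_eval, Nat.add_sub_cancel, Nat.cast_succ] at hm
      simp only [Multiset.map_cons, Multiset.sum_cons, Multiset.map_map, Function.comp_def]
      rw [← Finset.sum_eq_multiset_sum, ← Finset.sum_eq_multiset_sum]
      linear_combination hm - descPochhammer_succ_eval_add_one_sub m x0
  obtain ⟨hx0, -⟩ | ⟨-, u, hinf, h0⟩ :=
    Multiset.cons_eq_cons.1 (Multiset.eq_of_sum_map_descPochhammer_eval_eq hsums)
  · simp at hx0
  obtain ⟨α'', -, hα'', hinf_erase⟩ := Finset.exists_map_erase_val_eq_of_map_val_eq_cons hinf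
  obtain ⟨α', -, hα', h0_erase⟩ := Finset.exists_map_erase_val_eq_of_map_val_eq_cons h0
  exact ⟨α'', α', by rw [hα'', hα'], hinf_erase.trans h0_erase.symm⟩
end

section
/- Let $\hat\sigma^{(s)} = \sigma'^{(s)} + a/N$ and assume all quantities $\sigma^{(k)} - \sigma^{(l)}$ ($k\ne l$), $\hat\sigma^{(k)} - \hat\sigma^{(l)}$ ($k\ne l$), and $\hat\sigma^{(m)} - \sigma^{(s)}$ are not integers. Define $F_{lj} = \prod_{k\ne l}\frac{\sin\pi(a/N + \sigma'^{(j)} - \sigma^{(k)})}{\sin\pi(\sigma^{(k)}-\sigma^{(l)})}$ (i.e. $F(\boldsymbol\sigma', a-1, \boldsymbol\sigma)$), $W_{kl} = \prod_{s\ne l}\frac{e^{2\pi i(\sigma^{(k)} - a/N)} - e^{2\pi i \sigma'^{(s)}}}{e^{2\pi i \sigma'^{(l)}} - e^{2\pi i \sigma'^{(s)}}}$, and diagonal matrices $X = \mathrm{diag}(x^{(s)})$, $Y = \mathrm{diag}(y^{(s)})$ with $(x^{(s)})^{-1} = e^{i\pi(N-1)\sigma^{(s)}}\prod_{m}\sin\pi(\hat\sigma^{(m)}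 - \sigma^{(s)})\prod_{m\ne s}\sin\pi(\sigma^{(m)}-\sigma^{(s)})$ and $(y^{(s)})^{-1} = e^{i\pi(N-1)\hat\sigma^{(s)}}\prod_m \sin\pi(\hat\sigma^{(s)}-\sigma^{(m)})\prod_{m\ne s}\sin\pi(\hat\sigma^{(m)}-\hat\sigma^{(s)})$. Then $F = X\, W\, Y^{-1}$. -/
/-!
Write `e(z) = exp (2πiz)` and `σ̂ₛ = σ'ₛ + a/N`. From `e(u) - e(v) = 2i exp(πi(u + v)) sin π(u - v)`
each entry of `W` becomes `W_lj = exp(πi(N-1)(σₗ - σ̂ⱼ)) ∏_{s≠j} sin π(σₗ - σ̂ₛ) / sin π(σ̂ⱼ - σ̂ₛ)`.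
In `x_l W_lj / y_j` the exponentials then cancel, the numerators of `W_lj` pair off with the
factors `sin π(σ̂ₘ - σ̂ⱼ)` of `1 / y_j` (two sign changes per factor), and the factor
`sin π(σ̂ⱼ - σₗ)` shared by `1 / x_l` and `1 / y_j` cancels, leaving `F_lj`.
-/

open Finset Complex
open scoped Real

theorem sin_pi_mul_sub_comm (x y : ℂ) : sin (π * (x - y)) = -sin (π * (y - x)) := by
  rw [← sin_neg]; ring_nf

theorem exp_two_pi_I_mul_sub_exp (u v : ℂ) :
    exp (2 * π * I * u) - exp (2 * π * I * v) =
      2 * I * exp (π * I * (u + v)) * sin (π * (u - v)) := by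
  have hu : exp (2 * π * I * u) = exp (π * I * (u + v)) * exp (π * (u - v) * I) := by
    rw [← exp_add]; ring_nf
  have hv : exp (2 * π * I * v) = exp (π * I * (u + v)) * exp (-(π * (u - v)) * I) := by
    rw [← exp_add]; ring_nf
  rw [hu, hv, sin]
  linear_combination exp (π * I * (u + v)) *
    (exp (π * (u - v) * I) - exp (-(π * (u - v)) * I)) * I_mul_I

theorem exp_two_pi_I_mul_ratio (u v w : ℂ) :
    (exp (2 * π * I * u) - exp (2 * π * I * v)) / (exp (2 * π * I * w) - exp (2 * π * I * v)) =
      exp (π * I * (u - w)) * (sin (π * (u - v)) / sin (π * (w - v))) := by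
  have hc : 2 * I * exp (π * I * (w + v)) ≠ 0 := by simp [exp_ne_zero, I_ne_zero]
  have hsplit : exp (π * I * (u + v)) = exp (π * I * (u - w)) * exp (π * I * (w + v)) := by
    rw [← exp_add]; ring_nf
  rw [exp_two_pi_I_mul_sub_exp, exp_two_pi_I_mul_sub_exp, hsplit, ← mul_div_assoc]
  calc _ = 2 * I * exp (π * I * (w + v)) * (exp (π * I * (u - w)) * sin (π * (u - v))) /
        (2 * I * exp (π * I * (w + v)) * sin (π * (w - v))) := by ring
    _ = _ := mul_div_mul_left _ _ hc

theorem prod_exp_two_pi_I_mul_ratio {ι : Type*} (t : Finset ι) (u w : ℂ) (v : ι → ℂ) :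
    ∏ s ∈ t, (exp (2 * π * I * u) - exp (2 * π * I * v s)) /
        (exp (2 * π * I * w) - exp (2 * π * I * v s)) =
      exp (π * I * (u - w)) ^ #t * ∏ s ∈ t, sin (π * (u - v s)) / sin (π * (w - v s)) := by
  simp_rw [exp_two_pi_I_mul_ratio]
  rw [prod_mul_distrib, prod_const]

theorem prod_neg_mul_prod_neg {ι R : Type*} [CommRing R] (t : Finset ι) (f g : ι → R) :
    (∏ i ∈ t, -f i) * ∏ i ∈ t, -g i = (∏ i ∈ t, f i) * ∏ i ∈ t, g i := by
  rw [prod_neg, prod_neg, mul_mul_mul_comm, ← mul_pow, neg_one_mul, neg_neg, one_pow, one_mul]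

theorem Matrix.inv_diagonal_inv {n α : Type*} [Fintype n] [DecidableEq n] [Field α] {v : n → α}
    (hv : ∀ i, v i ≠ 0) : (diagonal fun i => (v i)⁻¹)⁻¹ = diagonal v :=
  inv_eq_right_inv (by rw [diagonal_mul_diagonal]; simp [hv])

theorem fusion_entry_eq {N : ℕ} (σ τ : Fin N → ℂ)
    (hτ : ∀ k l, k ≠ l → sin (π * (τ k - τ l)) ≠ 0)
    (hτσ : ∀ m s, sin (π * (τ m - σ s)) ≠ 0) (l j : Fin N) :
    ∏ k ∈ univ.erase l, sin (π * (τ j - σ k)) / sin (π * (σ k - σ l)) =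
      (exp (π * I * (N - 1) * σ l) * (∏ m, sin (π * (τ m - σ l))) *
          ∏ m ∈ univ.erase l, sin (π * (σ m - σ l)))⁻¹ *
        (exp (π * I * (σ l - τ j)) ^ (N - 1) *
          ∏ s ∈ univ.erase j, sin (π * (σ l - τ s)) / sin (π * (τ j - τ s))) *
        (exp (π * I * (N - 1) * τ j) * (∏ m, sin (π * (τ j - σ m))) *
          ∏ m ∈ univ.erase j, sin (π * (τ m - τ j))) := by
  have hexp : exp (π * I * (σ l - τ j)) ^ (N - 1) * exp (π * I * (N - 1) * τ j) =
      exp (π * I * (N - 1) * σ l) := by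
    rw [← exp_nat_mul, ← exp_add, Nat.cast_pred l.pos]
    ring_nf
  have hpair : (∏ s ∈ univ.erase j, sin (π * (σ l - τ s))) *
        ∏ m ∈ univ.erase j, sin (π * (τ m - τ j)) =
      (∏ s ∈ univ.erase j, sin (π * (τ s - σ l))) * ∏ s ∈ univ.erase j, sin (π * (τ j - τ s)) := by
    simp_rw [sin_pi_mul_sub_comm (σ l), sin_pi_mul_sub_comm (τ _) (τ j)]
    exact prod_neg_mul_prod_neg _ _ _
  have hD : ∏ s ∈ univ.erase j, sin (π * (τ j - τ s)) ≠ 0 :=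
    prod_ne_zero_iff.mpr fun s hs => hτ j s (ne_of_mem_erase hs).symm
  have hM : ∏ s ∈ univ.erase j, sin (π * (τ s - σ l)) ≠ 0 :=
    prod_ne_zero_iff.mpr fun s _ => hτσ s l
  rw [← mul_prod_erase univ _ (mem_univ j), ← mul_prod_erase univ _ (mem_univ l), ← hexp,
    prod_div_distrib, prod_div_distrib]
  have hG := hτσ j l
  field_simp
  set A := ∏ k ∈ univ.erase l, sin (π * (τ j - σ k))
  set B := ∏ k ∈ univ.erase l, sin (π * (σ k - σ l))
  linear_combination -(A / B) * hpair

theorem stmt18_general {N : ℕ} (σ σ' : Fin N → ℂ) (a : ℂ)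
    (h2 : ∀ k l : Fin N, k ≠ l → ∀ m : ℤ,
      (σ' k + a / N) - (σ' l + a / N) ≠ (m : ℂ))
    (h3 : ∀ m s : Fin N, ∀ n : ℤ, (σ' m + a / N) - σ s ≠ (n : ℂ)) :
    (Matrix.of fun l j : Fin N =>
        ∏ k ∈ univ.erase l,
          Complex.sin ((Real.pi : ℂ) * (a / N + σ' j - σ k)) /
            Complex.sin ((Real.pi : ℂ) * (σ k - σ l))) =
      Matrix.diagonal (fun s : Fin N =>
          (Complex.exp ((Real.pi : ℂ) * Complex.I * (N - 1) * σ s) *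
            (∏ m : Fin N, Complex.sin ((Real.pi : ℂ) * ((σ' m + a / N) - σ s))) *
            ∏ m ∈ univ.erase s, Complex.sin ((Real.pi : ℂ) * (σ m - σ s)))⁻¹) *
        (Matrix.of fun k l : Fin N =>
          ∏ s ∈ univ.erase l,
            (Complex.exp (2 * (Real.pi : ℂ) * Complex.I * (σ k - a / N)) -
                Complex.exp (2 * (Real.pi : ℂ) * Complex.I * σ' s)) /
              (Complex.exp (2 * (Real.pi : ℂ) * Complex.I * σ' l) -
                Complex.exp (2 * (Real.pi : ℂ) * Complex.I * σ' s))) *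
        (Matrix.diagonal (fun s : Fin N =>
          (Complex.exp ((Real.pi : ℂ) * Complex.I * (N - 1) * (σ' s + a / N)) *
            (∏ m : Fin N, Complex.sin ((Real.pi : ℂ) * ((σ' s + a / N) - σ m))) *
            ∏ m ∈ univ.erase s,
              Complex.sin ((Real.pi : ℂ) * ((σ' m + a / N) - (σ' s + a / N))))⁻¹))⁻¹ := by
  have hτ : ∀ k l, k ≠ l → sin (π * ((σ' k + a / N) - (σ' l + a / N))) ≠ 0 :=
    fun k l hkl => sin_pi_mul_ne_zero fun ⟨n, hn⟩ => h2 k l hkl n hn.symm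
  have hτσ : ∀ m s, sin (π * ((σ' m + a / N) - σ s)) ≠ 0 :=
    fun m s => sin_pi_mul_ne_zero fun ⟨n, hn⟩ => h3 m s n hn.symm
  rw [Matrix.inv_diagonal_inv fun s => mul_ne_zero (mul_ne_zero (exp_ne_zero _)
    (prod_ne_zero_iff.mpr fun m _ => hτσ s m))
    (prod_ne_zero_iff.mpr fun m hm => hτ m s (ne_of_mem_erase hm))]
  ext l j
  rw [Matrix.mul_diagonal, Matrix.diagonal_mul, Matrix.of_apply, Matrix.of_apply,
    prod_exp_two_pi_I_mul_ratio, card_erase_of_mem (mem_univ j), card_univ, Fintype.card_fin]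
  convert fusion_entry_eq σ (fun s => σ' s + a / N) hτ hτσ l j using 3 <;> ring_nf

/-- factorization `F = X W Y⁻¹` of the trigonometric fusion matrix
`F(σ', a-1, σ)` through the exponential Vandermonde-ratio matrix `W`,
with explicit diagonal matrices `X`, `Y`; here `σ̂_s = σ'_s + a/N`. -/
theorem stmt18 {N : ℕ} (σ σ' : Fin N → ℂ) (a : ℂ)
    (h1 : ∀ k l : Fin N, k ≠ l → ∀ m : ℤ, σ k - σ l ≠ (m : ℂ))
    (h2 : ∀ k l : Fin N, k ≠ l → ∀ m : ℤ,
      (σ' k + a / N) - (σ' l + a / N) ≠ (m : ℂ))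
    (h3 : ∀ m s : Fin N, ∀ n : ℤ, (σ' m + a / N) - σ s ≠ (n : ℂ)) :
    (Matrix.of fun l j : Fin N =>
        ∏ k ∈ univ.erase l,
          Complex.sin ((Real.pi : ℂ) * (a / N + σ' j - σ k)) /
            Complex.sin ((Real.pi : ℂ) * (σ k - σ l))) =
      Matrix.diagonal (fun s : Fin N =>
          (Complex.exp ((Real.pi : ℂ) * Complex.I * (N - 1) * σ s) *
            (∏ m : Fin N, Complex.sin ((Real.pi : ℂ) * ((σ' m + a / N) - σ s))) *
            ∏ m ∈ univ.erase s, Complex.sin ((Real.pi : ℂ) * (σ m - σ s)))⁻¹) *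
        (Matrix.of fun k l : Fin N =>
          ∏ s ∈ univ.erase l,
            (Complex.exp (2 * (Real.pi : ℂ) * Complex.I * (σ k - a / N)) -
                Complex.exp (2 * (Real.pi : ℂ) * Complex.I * σ' s)) /
              (Complex.exp (2 * (Real.pi : ℂ) * Complex.I * σ' l) -
                Complex.exp (2 * (Real.pi : ℂ) * Complex.I * σ' s))) *
        (Matrix.diagonal (fun s : Fin N =>
          (Complex.exp ((Real.pi : ℂ) * Complex.I * (N - 1) * (σ' s + a / N)) *
            (∏ m : Fin N, Complex.sin ((Real.pi : ℂ) * ((σ' s + a / N) - σ m))) *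
            ∏ m ∈ univ.erase s,
              Complex.sin ((Real.pi : ℂ) * ((σ' m + a / N) - (σ' s + a / N))))⁻¹))⁻¹ :=
  stmt18_general σ σ' a h2 h3
end
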